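/- Let Ĥ_misfit ∈ ℝ^{n×n} be symmetric positive semidefinite with eigendecomposition Ĥ_misfit = V Λ Vᵀ (V orthogonal, Λ = diag(λ₁ ≥ … ≥ λ_n ≥ 0)). Let V_r consist of the first r columns of V and D_r = diag(λ_i/(1+λ_i)) for i ≤ r. Then ‖(Ĥ_misfit + I)⁻¹ − (I − V_r D_r V_rᵀ)‖₂ = λ_{r+1}/(1+λ_{r+1}) ≤ λ_{r+1}. -/

import Mathlib

/-!
The orthogonal matrix `V` diagonalises every matrix involved: the error equals `V diag(μ) Vᵀ`
with `μᵢ = (1 + λᵢ)⁻¹ - 1 + λᵢ / (1 + λᵢ) = 0` for the `r` retained modes and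
`μᵢ = -λᵢ / (1 + λᵢ)` for the discarded ones. The spectral norm is invariant under
orthogonal conjugation and equals `maxᵢ |μᵢ|` on diagonal matrices; as `x ↦ x / (1 + x)` is
increasing and the `λᵢ` decrease, the maximum is attained at the first discarded mode.
-/

open Matrix
open scoped Matrix.Norms.L2Operator

namespace Matrix

variable {ι : Type*} [Fintype ι] [DecidableEq ι]

lemma l2_opNorm_mul_mul_transpose_of_mem_orthogonalGroup {V : Matrix ι ι ℝ}
    (hV : V ∈ orthogonalGroup ι ℝ) (A : Matrix ι ι ℝ) : ‖V * A * Vᵀ‖ = ‖A‖ := by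
  have hVt : Vᵀ ∈ unitary (Matrix ι ι ℝ) := by
    simpa [star_eq_conjTranspose] using Unitary.star_mem hV
  rw [CStarRing.norm_mul_mem_unitary _ hVt, CStarRing.norm_mem_unitary_mul _ hV]

section CommRing

variable {R : Type*} [CommRing R] {V : Matrix ι ι R}

lemma one_eq_mul_diagonal_one_mul_transpose (hV : Vᵀ * V = 1) :
    (1 : Matrix ι ι R) = V * diagonal 1 * Vᵀ := by
  rw [Pi.one_def, diagonal_one, Matrix.mul_one, mul_eq_one_comm.mp hV]

lemma mul_diagonal_mul_transpose_mul (hV : Vᵀ * V = 1) (d e : ι → R) :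
    V * diagonal d * Vᵀ * (V * diagonal e * Vᵀ) = V * diagonal (d * e) * Vᵀ := by
  calc _ = V * diagonal d * (Vᵀ * V) * diagonal e * Vᵀ := by simp only [Matrix.mul_assoc]
    _ = _ := by rw [hV, Matrix.mul_one, Matrix.mul_assoc V, diagonal_mul_diagonal]; rfl

end CommRing

lemma inv_mul_diagonal_mul_transpose {K : Type*} [Field K] {V : Matrix ι ι K}
    (hV : Vᵀ * V = 1) {d : ι → K} (hd : ∀ i, d i ≠ 0) :
    (V * diagonal d * Vᵀ)⁻¹ = V * diagonal d⁻¹ * Vᵀ := by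
  refine inv_eq_left_inv ?_
  have hinv : d⁻¹ * d = 1 := funext fun i => inv_mul_cancel₀ (hd i)
  rw [mul_diagonal_mul_transpose_mul hV, hinv, ← one_eq_mul_diagonal_one_mul_transpose hV]

lemma submatrix_castLE_mul_diagonal_mul_transpose {m R : Type*} [Semiring R] {n r : ℕ}
    (V : Matrix m (Fin n) R) (h : r ≤ n) (d : Fin n → R) :
    V.submatrix id (Fin.castLE h) * diagonal (fun j => d (Fin.castLE h j)) *
        (V.submatrix id (Fin.castLE h))ᵀ =
      V * diagonal (fun i : Fin n => if (i : ℕ) < r then d i else 0) * Vᵀ := by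
  ext i j
  rw [mul_apply, mul_apply]
  simp only [mul_diagonal, transpose_apply, submatrix_apply, id_eq]
  refine Fintype.sum_of_injective _ (Fin.castLE_injective h) _ _ (fun k hk => ?_)
    fun k => ?_
  · have hkr : ¬ (k : ℕ) < r := fun hkr => hk ⟨⟨k, hkr⟩, rfl⟩
    simp [hkr]
  · simp

end Matrix

lemma norm_ite_lt_eq_of_antitone {n r : ℕ} (hr : r < n) {f : Fin n → ℝ} (hf : Antitone f)
    (hf0 : ∀ i, 0 ≤ f i) : ‖fun i : Fin n => if (i : ℕ) < r then 0 else f i‖ = f ⟨r, hr⟩ := by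
  refine le_antisymm ((pi_norm_le_iff_of_nonneg (hf0 _)).mpr fun i => ?_) ?_
  · split_ifs with hi
    · simpa using hf0 _
    · rw [Real.norm_of_nonneg (hf0 i)]
      exact hf (Fin.le_def.mpr (not_lt.mp hi))
  · simpa [Real.norm_of_nonneg (hf0 _)] using
      norm_le_pi_norm (fun i : Fin n => if (i : ℕ) < r then 0 else f i) ⟨r, hr⟩

lemma div_one_add_le_div_one_add {a b : ℝ} (ha : 0 ≤ a) (hab : a ≤ b) :
    a / (1 + a) ≤ b / (1 + b) := by
  rw [div_le_div_iff₀ (by linarith) (by linarith)]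
  linarith

/-- Spectral-norm error of the rank-`r` approximation of the inverse
preconditioned Hessian: if `Ĥ_misfit = V Λ Vᵀ` with `V` orthogonal and
decreasing nonnegative eigenvalues `λ₁ ≥ … ≥ λ_n ≥ 0`, then
`‖(Ĥ_misfit + I)⁻¹ − (I − V_r D_r V_rᵀ)‖₂ = λ_{r+1}/(1+λ_{r+1}) ≤ λ_{r+1}`. -/
theorem low_rank_inverse_error {n : ℕ}
    (V : Matrix (Fin n) (Fin n) ℝ) (hV : Vᵀ * V = 1)
    (lam : Fin n → ℝ) (hdec : Antitone lam) (hpos : ∀ i, 0 ≤ lam i)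
    (Hm : Matrix (Fin n) (Fin n) ℝ) (hHm : Hm = V * diagonal lam * Vᵀ)
    (r : ℕ) (hr : r < n)
    (Vr : Matrix (Fin n) (Fin r) ℝ)
    (hVr : Vr = Matrix.of fun i (j : Fin r) => V i (Fin.castLE hr.le j))
    (Dr : Matrix (Fin r) (Fin r) ℝ)
    (hDr : Dr = diagonal fun j : Fin r =>
      lam (Fin.castLE hr.le j) / (1 + lam (Fin.castLE hr.le j))) :
    ‖Matrix.toEuclideanCLM (𝕜 := ℝ) (n := Fin n) ((Hm + 1)⁻¹ - (1 - Vr * Dr * Vrᵀ))‖ =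
        lam ⟨r, hr⟩ / (1 + lam ⟨r, hr⟩) ∧
      lam ⟨r, hr⟩ / (1 + lam ⟨r, hr⟩) ≤ lam ⟨r, hr⟩ := by
  have hlam1 : ∀ i, 0 < 1 + lam i := fun i => by linarith [hpos i]
  have hinv : (Hm + 1)⁻¹ = V * diagonal (1 + lam)⁻¹ * Vᵀ := by
    have hsum : Hm + 1 = V * diagonal (1 + lam) * Vᵀ := by
      rw [hHm, one_eq_mul_diagonal_one_mul_transpose hV, ← add_mul, ← mul_add, add_comm,
        diagonal_add]
      rfl
    rw [hsum, inv_mul_diagonal_mul_transpose (d := 1 + lam) hV fun i => (hlam1 i).ne']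
  have htrunc : Vr * Dr * Vrᵀ =
      V * diagonal (fun i : Fin n => if (i : ℕ) < r then lam i / (1 + lam i) else 0) * Vᵀ := by
    subst hVr hDr
    exact submatrix_castLE_mul_diagonal_mul_transpose V hr.le fun i => lam i / (1 + lam i)
  have herr : (Hm + 1)⁻¹ - (1 - Vr * Dr * Vrᵀ) = V * diagonal
      (-fun i : Fin n => if (i : ℕ) < r then 0 else lam i / (1 + lam i)) * Vᵀ := by
    rw [hinv, htrunc, one_eq_mul_diagonal_one_mul_transpose hV]
    simp only [← mul_sub, ← sub_mul, diagonal_sub]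
    congr 3 with i
    have := (hlam1 i).ne'
    simp only [Pi.neg_apply, Pi.inv_apply, Pi.add_apply, Pi.one_apply]
    split_ifs <;> field_simp <;> ring
  refine ⟨?_, div_le_self (hpos _) (le_add_of_nonneg_right (hpos _))⟩
  rw [l2_opNorm_toEuclideanCLM, herr,
    l2_opNorm_mul_mul_transpose_of_mem_orthogonalGroup ((mem_orthogonalGroup_iff' _ _).mpr hV),
    l2_opNorm_diagonal, norm_neg]
  exact norm_ite_lt_eq_of_antitone hr
    (fun i j hij => div_one_add_le_div_one_add (hpos j) (hdec hij))
    fun i => div_nonneg (hpos i) (hlam1 i).le
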